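/- arXiv:1601.00950 — 6 statements merged into one kernel-verified Lean document; each statement's English description precedes it below -/
import Mathlib

section
/- Let n ≥ 1 be an integer, let v₁, …, vₙ ≥ 1 and N ≥ 0 be integers with v₁ + ⋯ + vₙ ≥ N + 1, and let f ∈ ℚ[x₁, …, xₙ] be a polynomial. Then the function (x₁, …, xₙ) ↦ (1−x₁)^{v₁−1} ⋯ (1−xₙ)^{vₙ−1} f(x₁, …, xₙ) / (1 − x₁⋯xₙ)^N is Lebesgue-integrable on the open unit cube (0,1)ⁿ (i.e., the integral ∫_{(0,1)ⁿ} of this function is absolutely convergent). -/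
open MeasureTheory

/-- The open unit cube `(0,1)^n` in `ℝ^n`. -/
def unitCube (n : ℕ) : Set (Fin n → ℝ) := Set.univ.pi fun _ => Set.Ioo (0 : ℝ) 1

lemma aux_one_dim (e : ℝ) (he : -1 < e) :
    IntegrableOn (fun t : ℝ => (1 - t) ^ e) (Set.Ioo (0 : ℝ) 1) := by
  have h1 : IntervalIntegrable (fun x : ℝ => x ^ e) volume 0 1 :=
    intervalIntegral.intervalIntegrable_rpow' he
  have h2 := (h1.comp_sub_left 1).symm
  simp only [sub_zero, sub_self] at h2
  rw [intervalIntegrable_iff_integrableOn_Ioo_of_le (by norm_num)] at h2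
  exact h2

theorem stmt0 (n : ℕ) (hn : 1 ≤ n) (v : Fin n → ℕ) (hv : ∀ i, 1 ≤ v i)
    (N : ℕ) (hsum : N + 1 ≤ ∑ i, v i) (f : MvPolynomial (Fin n) ℚ) :
    IntegrableOn
      (fun x : Fin n → ℝ =>
        (∏ i, (1 - x i) ^ (v i - 1)) * MvPolynomial.aeval x f / (1 - ∏ i, x i) ^ N)
      (unitCube n) := by
  classical
  have hVpos' : (0 : ℕ) < ∑ i, v i := lt_of_lt_of_le (Nat.succ_pos N) hsum
  set V : ℝ := ((∑ i, v i : ℕ) : ℝ) with hV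
  have hVpos : (0 : ℝ) < V := by rw [hV]; exact_mod_cast hVpos'
  have hNV : (N : ℝ) + 1 ≤ V := by rw [hV]; exact_mod_cast hsum
  -- the weights and exponents
  set w : Fin n → ℝ := fun i => N * v i / V with hw
  have hw0 : ∀ i, 0 ≤ w i := fun i =>
    div_nonneg (mul_nonneg (Nat.cast_nonneg _) (Nat.cast_nonneg _)) hVpos.le
  have hsumw : ∑ i, w i = (N : ℝ) := by
    rw [hw]
    rw [← Finset.sum_div, ← Finset.mul_sum]
    have : (∑ i, (v i : ℝ)) = V := by rw [hV]; push_cast; ring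
    rw [this]
    field_simp
  set e : Fin n → ℝ := fun i => (v i : ℝ) - 1 - w i with he
  have he_neg1 : ∀ i, -1 < e i := by
    intro i
    have hvi : (1 : ℝ) ≤ v i := by exact_mod_cast hv i
    have h1 : w i ≤ (V - 1) * v i / V := by
      rw [hw]
      rw [div_le_div_iff_of_pos_right hVpos]
      have : (N : ℝ) ≤ V - 1 := by linarith
      nlinarith
    have h2 : (V - 1) * (v i : ℝ) / V = (v i : ℝ) - v i / V := by
      field_simp
    have h3 : (v i : ℝ) / V > 0 := div_pos (by linarith) hVpos
    simp only [he]
    rw [h2] at h1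
    linarith
  -- bound on the polynomial
  obtain ⟨C, hC⟩ : ∃ C : ℝ, ∀ x ∈ Set.Icc (0 : Fin n → ℝ) 1,
      ‖(MvPolynomial.aeval x f : ℝ)‖ ≤ C := by
    have hcont : Continuous fun x : Fin n → ℝ => (MvPolynomial.aeval x f : ℝ) := by
      simp only [MvPolynomial.aeval_def, MvPolynomial.eval₂_eq_eval_map]
      exact MvPolynomial.continuous_eval _
    exact (isCompact_Icc).exists_bound_of_continuousOn hcont.continuousOn
  have hC0 : 0 ≤ C := by
    have : (fun _ : Fin n => (1/2 : ℝ)) ∈ Set.Icc (0 : Fin n → ℝ) 1 := by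
      constructor <;> intro i <;> norm_num
    exact le_trans (norm_nonneg _) (hC _ this)
  -- the dominating function
  set g : Fin n → ℝ → ℝ := fun i => (Set.Ioo (0:ℝ) 1).indicator (fun t => (1 - t) ^ (e i))
    with hg
  have hg_int : ∀ i, Integrable (g i) := by
    intro i
    rw [hg]
    simpa [IntegrableOn, integrable_indicator_iff measurableSet_Ioo] using
      aux_one_dim (e i) (he_neg1 i)
  have hG_int : Integrable (fun x : Fin n → ℝ => C * ∏ i, g i (x i)) :=
    (Integrable.fintype_prod hg_int).const_mul C
  -- facts about points of the cube
  have hmem : ∀ x ∈ unitCube n, ∀ i, x i ∈ Set.Ioo (0:ℝ) 1 := by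
    intro x hx i; exact hx i (Set.mem_univ i)
  have hcube_meas : MeasurableSet (unitCube n) :=
    MeasurableSet.univ_pi fun i => measurableSet_Ioo
  have hdenpos : ∀ x ∈ unitCube n, (0:ℝ) < 1 - ∏ i, x i := by
    intro x hx
    have hxi := hmem x hx
    obtain ⟨j⟩ : Nonempty (Fin n) := Fin.pos_iff_nonempty.mp (lt_of_lt_of_le one_pos hn)
    have hPle : (∏ i, x i) ≤ x j := by
      rw [← Finset.mul_prod_erase Finset.univ x (Finset.mem_univ j)]
      calc x j * ∏ k ∈ Finset.univ.erase j, x k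
          ≤ x j * 1 := by
            apply mul_le_mul_of_nonneg_left ?_ (hxi j).1.le
            exact Finset.prod_le_one (fun k _ => (hxi k).1.le) (fun k _ => (hxi k).2.le)
        _ = x j := mul_one _
    linarith [(hxi j).2]
  -- key pointwise bound
  have key : ∀ x ∈ unitCube n,
      ‖(∏ i, (1 - x i) ^ (v i - 1)) * MvPolynomial.aeval x f / (1 - ∏ i, x i) ^ N‖
        ≤ C * ∏ i, g i (x i) := by
    intro x hx
    have hxi := hmem x hx
    have ht : ∀ i, (0:ℝ) < 1 - x i := fun i => by have := (hxi i).2; linarith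
    have hP : (0:ℝ) < 1 - ∏ i, x i := hdenpos x hx
    have hPle : ∀ i, (∏ k, x k) ≤ x i := by
      intro i
      rw [← Finset.mul_prod_erase Finset.univ x (Finset.mem_univ i)]
      calc x i * ∏ k ∈ Finset.univ.erase i, x k
          ≤ x i * 1 := by
            apply mul_le_mul_of_nonneg_left ?_ (hxi i).1.le
            exact Finset.prod_le_one (fun k _ => (hxi k).1.le) (fun k _ => (hxi k).2.le)
        _ = x i := mul_one _
    -- geometric mean inequality
    have hgeom : ∏ i, (1 - x i) ^ (w i) ≤ (1 - ∏ i, x i) ^ N := by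
      calc ∏ i, (1 - x i) ^ (w i)
          ≤ ∏ i, (1 - ∏ k, x k) ^ (w i) := by
            apply Finset.prod_le_prod
            · exact fun i _ => Real.rpow_nonneg (ht i).le _
            · intro i _
              exact Real.rpow_le_rpow (ht i).le (by linarith [hPle i]) (hw0 i)
        _ = (1 - ∏ k, x k) ^ (∑ i, w i) := (Real.rpow_sum_of_pos hP w Finset.univ).symm
        _ = (1 - ∏ k, x k) ^ ((N:ℕ):ℝ) := by rw [hsumw]
        _ = (1 - ∏ k, x k) ^ N := Real.rpow_natCast _ N
    have hgeompos : (0:ℝ) < ∏ i, (1 - x i) ^ (w i) :=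
      Finset.prod_pos fun i _ => Real.rpow_pos_of_pos (ht i) _
    -- rewrite numerator nat powers as rpow
    have hnum : ∏ i, (1 - x i) ^ (v i - 1) = ∏ i, (1 - x i) ^ ((v i : ℝ) - 1) := by
      apply Finset.prod_congr rfl
      intro i _
      rw [← Real.rpow_natCast (1 - x i) (v i - 1)]
      congr 1
      have : ((v i - 1 : ℕ) : ℝ) = (v i : ℝ) - 1 := by
        have := hv i
        push_cast [Nat.cast_sub this]
        ring
      rw [this]
    have hnum_nonneg : (0:ℝ) ≤ ∏ i, (1 - x i) ^ ((v i : ℝ) - 1) :=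
      Finset.prod_nonneg fun i _ => Real.rpow_nonneg (ht i).le _
    -- the main chain
    have hmain : (∏ i, (1 - x i) ^ ((v i : ℝ) - 1)) / (1 - ∏ i, x i) ^ N
        ≤ ∏ i, (1 - x i) ^ (e i) := by
      calc (∏ i, (1 - x i) ^ ((v i : ℝ) - 1)) / (1 - ∏ i, x i) ^ N
          ≤ (∏ i, (1 - x i) ^ ((v i : ℝ) - 1)) / ∏ i, (1 - x i) ^ (w i) :=
            div_le_div_of_nonneg_left hnum_nonneg hgeompos hgeom
        _ = ∏ i, (1 - x i) ^ (e i) := by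
            rw [← Finset.prod_div_distrib]
            apply Finset.prod_congr rfl
            intro i _
            rw [← Real.rpow_sub (ht i)]
    -- norms
    rw [norm_div, norm_mul, norm_pow]
    rw [Real.norm_of_nonneg (Finset.prod_nonneg fun i _ => pow_nonneg (ht i).le _ :
      (0:ℝ) ≤ ∏ i, (1 - x i) ^ (v i - 1))]
    rw [Real.norm_of_nonneg hP.le]
    have hxIcc : x ∈ Set.Icc (0 : Fin n → ℝ) 1 :=
      ⟨fun i => (hxi i).1.le, fun i => (hxi i).2.le⟩
    have hgval : ∀ i, g i (x i) = (1 - x i) ^ (e i) := by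
      intro i
      rw [hg]
      simp [Set.indicator_of_mem (hxi i)]
    calc (∏ i, (1 - x i) ^ (v i - 1)) * ‖(MvPolynomial.aeval x f : ℝ)‖ /
            (1 - ∏ i, x i) ^ N
        ≤ (∏ i, (1 - x i) ^ (v i - 1)) * C / (1 - ∏ i, x i) ^ N := by
          rw [div_le_div_iff_of_pos_right (pow_pos hP N)]
          exact mul_le_mul_of_nonneg_left (hC x hxIcc)
            (Finset.prod_nonneg fun i _ => pow_nonneg (ht i).le _)
      _ = C * ((∏ i, (1 - x i) ^ ((v i : ℝ) - 1)) / (1 - ∏ i, x i) ^ N) := by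
          rw [hnum]; ring
      _ ≤ C * ∏ i, (1 - x i) ^ (e i) := mul_le_mul_of_nonneg_left hmain hC0
      _ = C * ∏ i, g i (x i) := by
          congr 1
          exact (Finset.prod_congr rfl fun i _ => (hgval i).symm)
  -- measurability
  have hF_meas : AEStronglyMeasurable
      (fun x : Fin n → ℝ =>
        (∏ i, (1 - x i) ^ (v i - 1)) * MvPolynomial.aeval x f / (1 - ∏ i, x i) ^ N)
      (volume.restrict (unitCube n)) := by
    apply ContinuousOn.aestronglyMeasurable ?_ hcube_meas
    apply ContinuousOn.div
    · apply Continuous.continuousOn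
      apply Continuous.mul
      · exact continuous_finset_prod _ fun i _ =>
          (continuous_const.sub (continuous_apply i)).pow _
      · simp only [MvPolynomial.aeval_def, MvPolynomial.eval₂_eq_eval_map]
        exact MvPolynomial.continuous_eval _
    · exact ((continuous_const.sub (continuous_finset_prod _
        fun i _ => continuous_apply i)).pow N).continuousOn
    · intro x hx
      exact pow_ne_zero N (hdenpos x hx).ne'
  -- conclude
  apply Integrable.mono' hG_int.restrict hF_meas
  rw [ae_restrict_iff' hcube_meas]
  filter_upwards with x hx using key x hx
end

section
/- Let n ≥ 1 and N ≥ 0 be integers and let P ∈ ℚ[x₁, …, xₙ] be a polynomial. Write P(1−y₁, …, 1−yₙ) = Σ_b c_b y₁^{b₁} ⋯ yₙ^{bₙ} as a finite sum over multi-indices b = (b₁, …, bₙ) of non-negative integers with coefficients c_b ∈ ℚ. If the function (x₁, …, xₙ) ↦ P(x₁, …, xₙ)/(1 − x₁⋯xₙ)^N is Lebesgue-integrable on the open unit cube (0,1)ⁿ, then every multi-index b with c_b ≠ 0 satisfies b₁ + ⋯ + bₙ ≥ N + 1 − n. -/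
open MeasureTheory

/-!
Write `Q(y) = P(1 - y)` and let `Q_D` be the lowest nonzero homogeneous component of `Q`, so that
`D ≤ ∑ bᵢ`. Choose `z₀ ∈ (0,1)ⁿ` with `Q_D(z₀) ≠ 0`. Since `Q(t • z) = t^D (Q_D(z) + O(t))`, on the
box `1 - t • B(z₀, ρ)` the numerator is at least a constant times `t^D`, while
`0 < 1 - ∏ xᵢ ≤ ∑ (1 - xᵢ) ≤ n t`. The box has volume a constant times `tⁿ`, so the integral of the
absolute value over it is bounded below by a constant times `t^(D + n - N)`, which is bounded away
from `0` when `D + n ≤ N`. As `t → 0` the boxes shrink, contradicting the absolute continuity of the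
integral of an integrable function.
-/

open MvPolynomial Filter Topology Set
open scoped ENNReal Pointwise

theorem Finset.one_sub_prod_le_sum_one_sub {ι R : Type*} [CommRing R] [LinearOrder R]
    [IsStrictOrderedRing R] (s : Finset ι) {x : ι → R} (h0 : ∀ i ∈ s, 0 ≤ x i)
    (h1 : ∀ i ∈ s, x i ≤ 1) : 1 - ∏ i ∈ s, x i ≤ ∑ i ∈ s, (1 - x i) := by
  induction s using Finset.cons_induction with
  | empty => simp
  | cons a s _ ih =>
    rw [Finset.prod_cons, Finset.sum_cons]
    have hs0 : ∀ i ∈ s, 0 ≤ x i := fun i hi => h0 i (Finset.mem_cons_of_mem hi)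
    have hs1 : ∀ i ∈ s, x i ≤ 1 := fun i hi => h1 i (Finset.mem_cons_of_mem hi)
    have hP : ∏ i ∈ s, x i ≤ 1 := Finset.prod_le_one hs0 hs1
    nlinarith [ih hs0 hs1, h0 a (Finset.mem_cons_self a s), h1 a (Finset.mem_cons_self a s)]

namespace MvPolynomial

theorem aeval_one_sub_aeval_one_sub_X {σ R S : Type*} [CommRing R] [CommRing S] [Algebra R S]
    (P : MvPolynomial σ R) (x : σ → S) :
    aeval (1 - x) (aeval (fun i => (1 - X i : MvPolynomial σ R)) P) = aeval x P := by
  rw [← AlgHom.comp_apply (aeval (1 - x)), comp_aeval]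
  congr 1
  ext i
  simp

theorem exists_mem_eval_ne_zero {𝕜 σ : Type*} [RCLike 𝕜] [Fintype σ]
    {U : Set (σ → 𝕜)} (hU : IsOpen U) (hU₀ : U.Nonempty) {p : MvPolynomial σ 𝕜} (hp : p ≠ 0) :
    ∃ z ∈ U, eval z p ≠ 0 := by
  by_contra! h
  obtain ⟨z₀, hz₀⟩ := hU₀
  have hzero : (fun z => eval z p) =ᶠ[𝓝 z₀] 0 :=
    Filter.eventually_of_mem (hU.mem_nhds hz₀) h
  have hanalytic := AnalyticOnNhd.eval_continuousLinearMap (ContinuousLinearMap.id 𝕜 (σ → 𝕜)) p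
  have := hanalytic.eqOn_zero_of_preconnected_of_eventuallyEq_zero isPreconnected_univ
    (Set.mem_univ z₀) hzero
  refine hp (funext fun x => ?_)
  simpa using this (Set.mem_univ x)

theorem IsHomogeneous.eval_smul {σ R : Type*} [CommSemiring R] [Fintype σ]
    {p : MvPolynomial σ R} {d : ℕ} (hp : p.IsHomogeneous d) (t : R) (z : σ → R) :
    eval (t • z) p = t ^ d * eval z p := by
  simp only [eval_eq', Finset.mul_sum]
  refine Finset.sum_congr rfl fun m hm => ?_
  have hdeg : ∑ i, m i = d := by
    rw [← Finsupp.degree_eq_sum, Finsupp.degree_eq_weight_one]; exact hp (mem_support_iff.mp hm)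
  simp only [Pi.smul_apply, smul_eq_mul, mul_pow, Finset.prod_mul_distrib,
    Finset.prod_pow_eq_pow_sum, hdeg]
  ring

theorem exists_homogeneousComponent_ne_zero_of_coeff_ne_zero {σ R : Type*} [CommSemiring R]
    {p : MvPolynomial σ R} {b : σ →₀ ℕ} (hb : coeff b p ≠ 0) :
    ∃ D ≤ b.degree, (∀ d < D, homogeneousComponent d p = 0) ∧ homogeneousComponent D p ≠ 0 := by
  classical
  have hb' : homogeneousComponent b.degree p ≠ 0 := fun h => hb <| by
    simpa [h] using (coeff_homogeneousComponent b.degree p b).symm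
  have hex : ∃ d, homogeneousComponent d p ≠ 0 := ⟨_, hb'⟩
  exact ⟨Nat.find hex, Nat.find_min' hex hb', fun d hd => not_not.mp (Nat.find_min hex hd),
    Nat.find_spec hex⟩

theorem eventually_pow_mul_le_abs_eval_smul {σ : Type*} [Fintype σ] {p : MvPolynomial σ ℝ}
    {D : ℕ} (hlow : ∀ d < D, homogeneousComponent d p = 0) {z₀ : σ → ℝ}
    (hz₀ : eval z₀ (homogeneousComponent D p) ≠ 0) :
    ∀ᶠ w : ℝ × (σ → ℝ) in 𝓝 (0, z₀),
      |eval z₀ (homogeneousComponent D p)| / 2 * |w.1| ^ D ≤ |eval (w.1 • w.2) p| := by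
  set φ : ℝ × (σ → ℝ) → ℝ := fun w =>
    ∑ d ∈ Finset.range (p.totalDegree + 1), w.1 ^ (d - D) * eval w.2 (homogeneousComponent d p)
  have hfactor : ∀ w : ℝ × (σ → ℝ), eval (w.1 • w.2) p = w.1 ^ D * φ w := by
    rintro ⟨t, z⟩
    conv_lhs => rw [← sum_homogeneousComponent p]
    rw [map_sum, Finset.mul_sum]
    refine Finset.sum_congr rfl fun d _ => ?_
    rw [(homogeneousComponent_isHomogeneous d p).eval_smul]
    rcases lt_or_ge d D with hd | hd
    · simp [hlow d hd]
    · rw [← mul_assoc, ← pow_add, Nat.add_sub_cancel' hd]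
  have hφ₀ : φ (0, z₀) = eval z₀ (homogeneousComponent D p) := by
    refine (Finset.sum_eq_single D (fun d _ hd => ?_) fun hD => ?_).trans (by simp)
    · rcases hd.lt_or_gt with hd | hd
      · simp [hlow d hd]
      · simp [Nat.sub_ne_zero_of_lt hd]
    · have : p.totalDegree < D := by simpa using hD
      simp [homogeneousComponent_eq_zero D p this]
  have hφ : Continuous φ := continuous_finsetSum _ fun d _ =>
    (continuous_fst.pow _).mul ((continuous_eval _).comp continuous_snd)
  have hnear : ∀ᶠ w in 𝓝 (0, z₀), |eval z₀ (homogeneousComponent D p)| / 2 < |φ w| :=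
    (hφ.abs.tendsto (0, z₀)).eventually_const_lt (by rw [hφ₀]; exact half_lt_self (abs_pos.2 hz₀))
  filter_upwards [hnear] with w hw
  rw [hfactor, abs_mul, abs_pow, mul_comm]
  gcongr

end MvPolynomial

theorem not_integrableOn_of_tendsto_measure_zero {α E ι : Type*} [MeasurableSpace α]
    [NormedAddCommGroup E] {μ : Measure α} {f : α → E} {s : Set α} {l : Filter ι} [l.NeBot]
    {S : ι → Set α} {c : ℝ≥0∞} (hc : c ≠ 0) (hS : Tendsto (fun i => μ (S i)) l (𝓝 0))
    (hSs : ∀ᶠ i in l, S i ⊆ s) (hlow : ∀ᶠ i in l, c ≤ ∫⁻ x in S i, ‖f x‖ₑ ∂μ) :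
    ¬ IntegrableOn f s μ := by
  intro hf
  have hS' : Tendsto (fun i => μ.restrict s (S i)) l (𝓝 0) :=
    tendsto_of_tendsto_of_tendsto_of_le_of_le tendsto_const_nhds hS (fun _ => zero_le)
      fun i => Measure.restrict_le_self _
  have hlow' : ∀ᶠ i in l, c ≤ ∫⁻ x in S i, ‖f x‖ₑ ∂μ.restrict s := by
    filter_upwards [hSs, hlow] with i hi hci
    rwa [Measure.restrict_restrict_of_subset hi]
  exact hc (nonpos_iff_eq_zero.mp (ge_of_tendsto (tendsto_setLIntegral_zero hf.2.ne hS') hlow'))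

theorem isOpen_unitCube (n : ℕ) : IsOpen (unitCube n) :=
  isOpen_set_pi finite_univ fun _ _ => isOpen_Ioo

theorem one_sub_smul_mem_unitCube {n : ℕ} {z : Fin n → ℝ} (hz : z ∈ unitCube n) {t : ℝ}
    (ht : t ∈ Ioc 0 1) : 1 - t • z ∈ unitCube n := by
  intro i _
  obtain ⟨hz0, hz1⟩ := hz i (mem_univ i)
  simp only [Pi.sub_apply, Pi.one_apply, Pi.smul_apply, smul_eq_mul, mem_Ioo]
  constructor <;> nlinarith [ht.1, ht.2]

theorem prod_lt_one_of_mem_unitCube {n : ℕ} (hn : 1 ≤ n) {x : Fin n → ℝ} (hx : x ∈ unitCube n) :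
    ∏ i, x i < 1 := by
  have hx' := fun i => hx i (mem_univ i)
  simpa using Finset.prod_lt_prod_of_nonempty (g := 1) (fun i _ => (hx' i).1) (fun i _ => (hx' i).2)
    (Finset.univ_nonempty_iff.mpr ⟨⟨0, hn⟩⟩)

theorem one_sub_prod_one_sub_smul_le {n : ℕ} {z : Fin n → ℝ} (hz : z ∈ unitCube n) {t : ℝ}
    (ht : t ∈ Ioc 0 1) : 1 - ∏ i, (1 - t • z) i ≤ n * t := by
  have hz' := fun i => hz i (mem_univ i)
  have hx := fun i => one_sub_smul_mem_unitCube hz ht i (mem_univ i)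
  calc 1 - ∏ i, (1 - t • z) i ≤ ∑ i, (1 - (1 - t • z) i) :=
        Finset.one_sub_prod_le_sum_one_sub _ (fun i _ => (hx i).1.le) fun i _ => (hx i).2.le
    _ ≤ ∑ _i : Fin n, t := Finset.sum_le_sum fun i _ => by
        simp only [Pi.sub_apply, Pi.one_apply, Pi.smul_apply, smul_eq_mul, sub_sub_cancel]
        nlinarith [(hz' i).2, ht.1]
    _ = n * t := by simp

theorem div_pow_le_norm_div_one_sub_prod_pow {n : ℕ} (hn : 1 ≤ n) {z : Fin n → ℝ}
    (hz : z ∈ unitCube n) {t : ℝ} (ht : t ∈ Ioc 0 1) {a : ℝ} (N : ℕ) :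
    |a| / (n * t) ^ N ≤ ‖a / (1 - ∏ i, (1 - t • z) i) ^ N‖ := by
  have hden : 0 < 1 - ∏ i, (1 - t • z) i :=
    sub_pos.mpr (prod_lt_one_of_mem_unitCube hn (one_sub_smul_mem_unitCube hz ht))
  rw [norm_div, norm_pow, Real.norm_eq_abs, Real.norm_eq_abs, abs_of_pos hden]
  exact div_le_div_of_nonneg_left (abs_nonneg _) (pow_pos hden N)
    (pow_le_pow_left₀ hden.le (one_sub_prod_one_sub_smul_le hz ht) N)

theorem volume_preimage_one_sub_smul {n : ℕ} (t : ℝ) (B : Set (Fin n → ℝ)) :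
    volume ((fun x => 1 - x) ⁻¹' (t • B)) = ENNReal.ofReal (|t| ^ n) * volume B := by
  rw [(Measure.measurePreserving_sub_left volume (1 : Fin n → ℝ)).measure_preimage_emb
    (MeasurableEquiv.subLeft _).measurableEmbedding, Measure.addHaar_smul,
    Module.finrank_fin_fun, abs_pow]

theorem preimage_one_sub_smul_subset_unitCube {n : ℕ} {B : Set (Fin n → ℝ)}
    (hB : B ⊆ unitCube n) {t : ℝ} (ht : t ∈ Ioc 0 1) :
    (fun x => 1 - x) ⁻¹' (t • B) ⊆ unitCube n := by
  intro x hx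
  obtain ⟨z, hz, hzx⟩ := mem_smul_set.mp hx
  rw [← sub_sub_cancel 1 x, ← show t • z = 1 - x from hzx]
  exact one_sub_smul_mem_unitCube (hB hz) ht

theorem le_setLIntegral_preimage_one_sub_smul {n N D : ℕ} (hn : 1 ≤ n) (hDN : D + n ≤ N)
    {g : (Fin n → ℝ) → ℝ} {B : Set (Fin n → ℝ)} (hB : IsOpen B) (hBcube : B ⊆ unitCube n)
    {c : ℝ} (hc : 0 ≤ c) {t : ℝ} (ht : t ∈ Ioc 0 1) (hg : ∀ z ∈ B, c * t ^ D ≤ |g (t • z)|) :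
    ENNReal.ofReal (c / n ^ N) * volume B ≤
      ∫⁻ x in (fun x => 1 - x) ⁻¹' (t • B), ‖g (1 - x) / (1 - ∏ i, x i) ^ N‖ₑ := by
  have ht₀ := ht.1
  set S := (fun x => 1 - x) ⁻¹' (t • B)
  set κ := c * t ^ D / (n * t) ^ N with hκ
  have hbound : c / n ^ N ≤ κ * t ^ n := by
    have : κ * t ^ n = c / n ^ N * (t ^ (D + n) / t ^ N) := by
      rw [hκ, mul_pow, pow_add]
      ring
    rw [this]
    refine le_mul_of_one_le_right (by positivity) ?_
    rw [one_le_div (pow_pos ht₀ N)]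
    exact pow_le_pow_of_le_one ht₀.le ht.2 hDN
  have hpoint : ∀ x ∈ S, ENNReal.ofReal κ ≤ ‖g (1 - x) / (1 - ∏ i, x i) ^ N‖ₑ := by
    intro x hx
    obtain ⟨z, hz, hzx⟩ := mem_smul_set.mp hx
    obtain rfl : x = 1 - t • z := by rw [hzx, sub_sub_cancel]
    rw [← ofReal_norm, sub_sub_cancel]
    exact ENNReal.ofReal_le_ofReal <| (div_le_div_of_nonneg_right (hg z hz) (by positivity)).trans
      (div_pow_le_norm_div_one_sub_prod_pow hn (hBcube hz) ht N)
  have hmeas : MeasurableSet S :=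
    ((hB.smul₀ ht₀.ne').preimage (continuous_const.sub continuous_id)).measurableSet
  calc ENNReal.ofReal (c / n ^ N) * volume B
      ≤ ENNReal.ofReal κ * ENNReal.ofReal (t ^ n) * volume B := by
        rw [← ENNReal.ofReal_mul (by positivity)]
        gcongr
    _ = ENNReal.ofReal κ * volume S := by
        rw [volume_preimage_one_sub_smul, abs_of_pos ht₀, mul_assoc]
    _ = ∫⁻ _ in S, ENNReal.ofReal κ := (setLIntegral_const _ _).symm
    _ ≤ ∫⁻ x in S, ‖g (1 - x) / (1 - ∏ i, x i) ^ N‖ₑ := setLIntegral_mono' hmeas hpoint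

theorem not_integrableOn_unitCube_of_pow_mul_le_abs_smul {n N D : ℕ} (hn : 1 ≤ n)
    (hDN : D + n ≤ N) {g : (Fin n → ℝ) → ℝ} {z₀ : Fin n → ℝ} (hz₀ : z₀ ∈ unitCube n) {c : ℝ}
    (hc : 0 < c) (hg : ∀ᶠ w : ℝ × (Fin n → ℝ) in 𝓝 (0, z₀), c * |w.1| ^ D ≤ |g (w.1 • w.2)|) :
    ¬ IntegrableOn (fun x => g (1 - x) / (1 - ∏ i, x i) ^ N) (unitCube n) := by
  rw [nhds_prod_eq, eventually_prod_iff] at hg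
  obtain ⟨pt, hpt, pz, hpz, hg⟩ := hg
  obtain ⟨ρ, hρ, hball⟩ :=
    Metric.mem_nhds_iff.mp (inter_mem hpz ((isOpen_unitCube n).mem_nhds hz₀))
  have hvol : Tendsto (fun t : ℝ => volume ((fun x => 1 - x) ⁻¹' (t • Metric.ball z₀ ρ)))
      (𝓝[>] 0) (𝓝 0) := by
    have hpow : Tendsto (fun t : ℝ => ENNReal.ofReal (|t| ^ n)) (𝓝 0) (𝓝 0) :=
      (ENNReal.continuous_ofReal.comp (continuous_abs.pow n)).tendsto' 0 0 (by
        simp [Nat.one_le_iff_ne_zero.mp hn])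
    simpa only [volume_preimage_one_sub_smul, zero_mul] using
      (ENNReal.Tendsto.mul_const hpow (Or.inr measure_ball_lt_top.ne)).mono_left nhdsWithin_le_nhds
  have hsmall : ∀ᶠ t in 𝓝[>] (0 : ℝ), t ∈ Ioc 0 1 ∧ pt t :=
    Eventually.and (Ioc_mem_nhdsGT zero_lt_one) (nhdsWithin_le_nhds hpt)
  refine not_integrableOn_of_tendsto_measure_zero
    (mul_ne_zero (ENNReal.ofReal_pos.mpr (by positivity : 0 < c / n ^ N)).ne'
      (Metric.measure_ball_pos volume z₀ hρ).ne') hvol ?_ ?_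
  · filter_upwards [hsmall] with t ht
    exact preimage_one_sub_smul_subset_unitCube (fun z hz => (hball hz).2) ht.1
  · filter_upwards [hsmall] with t ⟨ht, htp⟩
    refine le_setLIntegral_preimage_one_sub_smul hn hDN Metric.isOpen_ball
      (fun z hz => (hball hz).2) hc.le ht fun z hz => ?_
    simpa [abs_of_pos ht.1] using hg htp (hball hz).1

theorem stmt1 (n N : ℕ) (hn : 1 ≤ n) (P : MvPolynomial (Fin n) ℚ)
    (hint : IntegrableOn
      (fun x : Fin n → ℝ => MvPolynomial.aeval x P / (1 - ∏ i, x i) ^ N)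
      (unitCube n)) :
    ∀ b : Fin n →₀ ℕ,
      MvPolynomial.coeff b
        (MvPolynomial.aeval
          (fun i : Fin n => (1 - MvPolynomial.X i : MvPolynomial (Fin n) ℚ)) P) ≠ 0 →
      N + 1 ≤ (∑ i, b i) + n := by
  intro b hb
  by_contra! hbN
  set Q : MvPolynomial (Fin n) ℝ := map (algebraMap ℚ ℝ) (aeval (fun i => 1 - X i) P)
  have hPQ : ∀ x : Fin n → ℝ, aeval x P = eval (1 - x) Q := fun x => by
    rw [eval_map, ← aeval_def, aeval_one_sub_aeval_one_sub_X]
  obtain ⟨D, hDb, hlow, hD⟩ :=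
    exists_homogeneousComponent_ne_zero_of_coeff_ne_zero (p := Q) (b := b)
      (by rw [coeff_map]; exact (map_ne_zero _).mpr hb)
  obtain ⟨z₀, hz₀, hQz₀⟩ := exists_mem_eval_ne_zero (isOpen_unitCube n)
    ⟨fun _ => 1 / 2, fun _ _ => by norm_num⟩ hD
  have hDN : D + n ≤ N := by
    rw [Finsupp.degree_eq_sum] at hDb
    omega
  refine not_integrableOn_unitCube_of_pow_mul_le_abs_smul (g := fun y => eval y Q) hn hDN hz₀
    (half_pos (abs_pos.mpr hQz₀)) (eventually_pow_mul_le_abs_eval_smul hlow hQz₀) ?_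
  simpa only [hPQ] using hint
end

section
/- Let n ≥ 2 and 2 ≤ k ≤ n be integers, and let E_{n−k} ∈ ℚ[X] be the polynomial such that Σ_{j=0}^∞ (j+1)^{n−k} x^j = E_{n−k}(x)/(1−x)^{n−k+1} for all real x with |x| < 1. Then the function (x₁, …, xₙ) ↦ E_{n−k}(x₁⋯xₙ)/(1 − x₁⋯xₙ)^{n−k+1} is Lebesgue-integrable on the open unit cube (0,1)ⁿ and ∫_{(0,1)ⁿ} E_{n−k}(x₁⋯xₙ)/(1 − x₁⋯xₙ)^{n−k+1} dx₁⋯dxₙ = ζ(k), where ζ(k) = Σ_{m=1}^∞ m^{−k} is the value of the Riemann zeta function at k. -/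
/-!
For `x` in the open cube the product `t = x₁⋯xₙ` lies in `(0,1)`, so the integrand is the sum of the
nonnegative series `∑ⱼ (j+1)^(n-k) tʲ`. The monomial `tʲ` splits as a product over the coordinates,
so Fubini gives `∫ tʲ = (j+1)^(-n)` and the `j`-th term integrates to `(j+1)^(-k)`. Since these
integrals are summable for `k ≥ 2`, the series may be integrated term by term.
-/

open MeasureTheory

theorem summable_add_one_pow_mul_geometric {R : Type*} [NormedCommRing R]
    [HasSummableGeomSeries R] (m : ℕ) {r : R} (hr : ‖r‖ < 1) :
    Summable fun j : ℕ => ((j : R) + 1) ^ m * r ^ j := by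
  simp_rw [add_pow, one_pow, mul_one, Finset.sum_mul]
  exact summable_sum fun i _ =>
    ((summable_pow_mul_geometric_of_norm_lt_one i hr).mul_left (m.choose i : R)).congr
      fun j => by ring

theorem integrable_and_hasSum_integral_of_nonneg {α : Type*} [MeasurableSpace α]
    {μ : Measure α} {F : ℕ → α → ℝ} {f : α → ℝ}
    (hF_int : ∀ j, Integrable (F j) μ) (hF_nonneg : ∀ j, 0 ≤ᵐ[μ] F j)
    (hF_sum : Summable fun j => ∫ a, F j a ∂μ) (h_lim : ∀ᵐ a ∂μ, HasSum (F · a) (f a)) :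
    Integrable f μ ∧ HasSum (fun j => ∫ a, F j a ∂μ) (∫ a, f a ∂μ) := by
  have hf_meas : AEStronglyMeasurable f μ :=
    aestronglyMeasurable_of_tendsto_ae Filter.atTop
      (fun N => Finset.aestronglyMeasurable_sum (Finset.range N) fun j _ => (hF_int j).1)
      (h_lim.mono fun a ha => by simpa only [Finset.sum_apply] using ha.tendsto_sum_nat)
  have hF_nonneg' : ∀ᵐ a ∂μ, ∀ j, 0 ≤ F j a := ae_all_iff.2 hF_nonneg
  have hf_nonneg : 0 ≤ᵐ[μ] f := by
    filter_upwards [h_lim, hF_nonneg'] with a ha h0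
    exact ha.nonneg h0
  have h_lintegral : ∫⁻ a, ENNReal.ofReal (f a) ∂μ = ENNReal.ofReal (∑' j, ∫ a, F j a ∂μ) := by
    calc ∫⁻ a, ENNReal.ofReal (f a) ∂μ = ∫⁻ a, ∑' j, ENNReal.ofReal (F j a) ∂μ := by
          refine lintegral_congr_ae ?_
          filter_upwards [h_lim, hF_nonneg'] with a ha h0
          rw [← ENNReal.ofReal_tsum_of_nonneg h0 ha.summable, ha.tsum_eq]
      _ = ∑' j, ENNReal.ofReal (∫ a, F j a ∂μ) := by
          rw [lintegral_tsum fun j => (hF_int j).aemeasurable.ennreal_ofReal]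
          exact tsum_congr fun j =>
            (ofReal_integral_eq_lintegral_ofReal (hF_int j) (hF_nonneg j)).symm
      _ = _ := (ENNReal.ofReal_tsum_of_nonneg (fun j => integral_nonneg_of_ae (hF_nonneg j))
            hF_sum).symm
  have h_norm : ∀ j, ∫ a, ‖F j a‖ ∂μ = ∫ a, F j a ∂μ := fun j =>
    integral_congr_ae <| (hF_nonneg j).mono fun a ha => Real.norm_of_nonneg ha
  refine ⟨⟨hf_meas, (hasFiniteIntegral_iff_ofReal hf_nonneg).2 ?_⟩, ?_⟩
  · exact h_lintegral ▸ ENNReal.ofReal_lt_top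
  · rw [← integral_congr_ae (h_lim.mono fun a ha => ha.tsum_eq)]
    exact hasSum_integral_of_summable_integral_norm hF_int (hF_sum.congr fun j => (h_norm j).symm)

theorem integrableOn_univ_pi_prod {ι E : Type*} [Fintype ι] [MeasureSpace E]
    [SigmaFinite (volume : Measure E)] {f : E → ℝ} {s : Set E} (hf : IntegrableOn f s) :
    IntegrableOn (fun x : ι → E => ∏ i, f (x i)) (Set.univ.pi fun _ => s) := by
  rw [IntegrableOn, volume_pi, Measure.restrict_pi_pi]
  exact Integrable.fintype_prod fun _ => hf

theorem setIntegral_univ_pi_prod_eq_pow {ι E : Type*} [Fintype ι] [MeasureSpace E]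
    [SigmaFinite (volume : Measure E)] (f : E → ℝ) (s : Set E) :
    ∫ x in Set.univ.pi (fun _ : ι => s), ∏ i, f (x i) = (∫ y in s, f y) ^ Fintype.card ι := by
  rw [volume_pi, Measure.restrict_pi_pi, integral_fintype_prod_eq_pow]

theorem integral_Ioo_zero_one_pow (j : ℕ) :
    ∫ y in Set.Ioo (0 : ℝ) 1, y ^ j = 1 / ((j : ℝ) + 1) := by
  rw [← integral_Ioc_eq_integral_Ioo, ← intervalIntegral.integral_of_le zero_le_one, integral_pow]
  simp

theorem measurableSet_unitCube (n : ℕ) : MeasurableSet (unitCube n) :=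
  MeasurableSet.univ_pi fun _ => measurableSet_Ioo

theorem prod_mem_Ioo_of_mem_unitCube {n : ℕ} (hn : n ≠ 0) {x : Fin n → ℝ}
    (hx : x ∈ unitCube n) : ∏ i, x i ∈ Set.Ioo (0 : ℝ) 1 := by
  simp only [unitCube, Set.mem_univ_pi, Set.mem_Ioo] at hx
  have : NeZero n := ⟨hn⟩
  refine ⟨Finset.prod_pos fun i _ => (hx i).1, ?_⟩
  simpa using Finset.prod_lt_prod_of_nonempty (fun i _ => (hx i).1) (fun i _ => (hx i).2)
    Finset.univ_nonempty

theorem integrableOn_unitCube_prod_pow (n j : ℕ) :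
    IntegrableOn (fun x : Fin n → ℝ => (∏ i, x i) ^ j) (unitCube n) := by
  simp_rw [← Finset.prod_pow]
  exact integrableOn_univ_pi_prod <|
    (continuous_pow j).integrableOn_Icc.mono_set Set.Ioo_subset_Icc_self

theorem setIntegral_unitCube_prod_pow (n j : ℕ) :
    ∫ x in unitCube n, (∏ i, x i) ^ j = 1 / ((j : ℝ) + 1) ^ n := by
  simp_rw [← Finset.prod_pow]
  rw [unitCube, setIntegral_univ_pi_prod_eq_pow (· ^ j), integral_Ioo_zero_one_pow,
    Fintype.card_fin, one_div_pow]

theorem summable_one_div_nat_add_one_pow {k : ℕ} (hk : 2 ≤ k) :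
    Summable fun j : ℕ => 1 / ((j : ℝ) + 1) ^ k := by
  have := (summable_nat_add_iff 1).2 (Real.summable_one_div_nat_pow.2 (by omega : 1 < k))
  simpa only [Nat.cast_add, Nat.cast_one] using this

theorem stmt4_general (n k : ℕ) (hk2 : 2 ≤ k) (hkn : k ≤ n) (E : Polynomial ℚ)
    (hE : ∀ x : ℝ, |x| < 1 →
      (∑' j : ℕ, ((j : ℝ) + 1) ^ (n - k) * x ^ j)
        = Polynomial.aeval x E / (1 - x) ^ (n - k + 1)) :
    IntegrableOn
      (fun x : Fin n → ℝ => Polynomial.aeval (∏ i, x i) E / (1 - ∏ i, x i) ^ (n - k + 1))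
      (unitCube n) ∧
    (∫ x in unitCube n, Polynomial.aeval (∏ i, x i) E / (1 - ∏ i, x i) ^ (n - k + 1))
      = ∑' m : ℕ, 1 / ((m : ℝ) + 1) ^ k := by
  have h_lim : ∀ᵐ x ∂(volume.restrict (unitCube n)),
      HasSum (fun j : ℕ => ((j : ℝ) + 1) ^ (n - k) * (∏ i, x i) ^ j)
        (Polynomial.aeval (∏ i, x i) E / (1 - ∏ i, x i) ^ (n - k + 1)) := by
    refine ae_restrict_of_forall_mem (measurableSet_unitCube n) fun x hx => ?_
    have h_abs : |∏ i, x i| < 1 := by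
      obtain ⟨h0, h1⟩ := prod_mem_Ioo_of_mem_unitCube (by omega) hx
      rwa [abs_of_pos h0]
    rw [← hE _ h_abs]
    exact (summable_add_one_pow_mul_geometric _ h_abs).hasSum
  have h_term (j : ℕ) :
      ∫ x in unitCube n, ((j : ℝ) + 1) ^ (n - k) * (∏ i, x i) ^ j = 1 / ((j : ℝ) + 1) ^ k := by
    rw [integral_const_mul, setIntegral_unitCube_prod_pow, ← Nat.sub_add_cancel hkn, pow_add,
      Nat.add_sub_cancel]
    field_simp
  have h_nonneg (j : ℕ) :
      0 ≤ᵐ[volume.restrict (unitCube n)] fun x => ((j : ℝ) + 1) ^ (n - k) * (∏ i, x i) ^ j :=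
    ae_restrict_of_forall_mem (measurableSet_unitCube n) fun x hx =>
      mul_nonneg (by positivity) (pow_nonneg (prod_mem_Ioo_of_mem_unitCube (by omega) hx).1.le j)
  obtain ⟨h_int, h_sum⟩ := integrable_and_hasSum_integral_of_nonneg
    (fun j => (integrableOn_unitCube_prod_pow n j).const_mul _) h_nonneg
    ((summable_one_div_nat_add_one_pow hk2).congr fun j => (h_term j).symm) h_lim
  exact ⟨h_int, h_sum.tsum_eq.symm.trans (tsum_congr h_term)⟩

theorem stmt4 (n k : ℕ) (hn : 2 ≤ n) (hk2 : 2 ≤ k) (hkn : k ≤ n) (E : Polynomial ℚ)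
    (hE : ∀ x : ℝ, |x| < 1 →
      (∑' j : ℕ, ((j : ℝ) + 1) ^ (n - k) * x ^ j)
        = Polynomial.aeval x E / (1 - x) ^ (n - k + 1)) :
    IntegrableOn
      (fun x : Fin n → ℝ => Polynomial.aeval (∏ i, x i) E / (1 - ∏ i, x i) ^ (n - k + 1))
      (unitCube n) ∧
    (∫ x in unitCube n, Polynomial.aeval (∏ i, x i) E / (1 - ∏ i, x i) ^ (n - k + 1))
      = ∑' m : ℕ, 1 / ((m : ℝ) + 1) ^ k :=
  stmt4_general n k hk2 hkn E hE
end

section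
/- Let n ≥ 1 be an integer and let u₁, …, uₙ, v₁, …, vₙ ≥ 1 and N ≥ 0 be integers with v₁ + ⋯ + vₙ ≥ N + 1. Then the function (x₁, …, xₙ) ↦ x₁^{u₁−1}⋯xₙ^{uₙ−1}(1−x₁)^{v₁−1}⋯(1−xₙ)^{vₙ−1}/(1 − x₁⋯xₙ)^N is Lebesgue-integrable on (0,1)ⁿ, and there exist rational numbers a₀, a₂, a₃, …, aₙ such that ∫_{(0,1)ⁿ} x₁^{u₁−1}⋯xₙ^{uₙ−1}(1−x₁)^{v₁−1}⋯(1−xₙ)^{vₙ−1}/(1 − x₁⋯xₙ)^N dx₁⋯dxₙ = a₀ + a₂ζ(2) + a₃ζ(3) + ⋯ + aₙζ(n). -/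
open MeasureTheory

/-- `ζ(k) = Σ_{m=1}^∞ m^{-k}`. -/
noncomputable def zetaVal (k : ℕ) : ℝ := ∑' m : ℕ, 1 / ((m : ℝ) + 1) ^ k

/-!
Expand `(1 - x₁⋯xₙ)^(-N) = Σ_m C(m+N-1, N-1) (x₁⋯xₙ)^m` and integrate termwise, which is legitimate
because all terms are nonnegative. The `m`-th term is `C(m+N-1, N-1) ∏ᵢ B(uᵢ + m, vᵢ)`, a rational
function of `m` over `ℚ` whose denominator `∏ᵢ (m+uᵢ)(m+uᵢ+1)⋯(m+uᵢ+vᵢ-1)` has degree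
`Σ vᵢ ≥ N + 1` and roots at negative integers of multiplicity at most `n`. So its partial fraction
decomposition is `Σ c_{jk} (m+j)^(-k)` with `k ≤ n` and no polynomial part. Summed over `m`, the
terms with `k ≥ 2` give `ζ(k)` minus a rational number; the terms with `k = 1` are not summable
separately, which forces `Σ_j c_{j1} = 0`, and then they telescope to a rational number.
-/

open Polynomial Filter Topology Nat Asymptotics

noncomputable def zetaSpan (n : ℕ) : Submodule ℚ ℝ where
  carrier := {x | ∃ a : ℕ → ℚ, x = (a 0 : ℝ) + ∑ k ∈ Finset.Icc 2 n, (a k : ℝ) * zetaVal k}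
  add_mem' := by
    rintro _ _ ⟨a, rfl⟩ ⟨b, rfl⟩
    refine ⟨a + b, ?_⟩
    simp only [Pi.add_apply, Rat.cast_add, add_mul, Finset.sum_add_distrib]
    ring
  zero_mem' := ⟨0, by simp⟩
  smul_mem' := by
    rintro q _ ⟨a, rfl⟩
    refine ⟨q • a, ?_⟩
    simp only [Rat.smul_def, Pi.smul_apply, smul_eq_mul, Rat.cast_mul, mul_add, Finset.mul_sum,
      mul_assoc]

theorem mem_zetaSpan {n : ℕ} {x : ℝ} :
    x ∈ zetaSpan n ↔ ∃ a : ℕ → ℚ, x = (a 0 : ℝ) + ∑ k ∈ Finset.Icc 2 n, (a k : ℝ) * zetaVal k :=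
  Iff.rfl

theorem ratCast_mem_zetaSpan (n : ℕ) (q : ℚ) : (q : ℝ) ∈ zetaSpan n :=
  ⟨Pi.single 0 q, by
    rw [Finset.sum_eq_zero fun k hk => by
      simp [show k ≠ 0 by simp at hk; omega]]
    simp⟩

theorem zetaVal_mem_zetaSpan {n k : ℕ} (h2k : 2 ≤ k) (hkn : k ≤ n) : zetaVal k ∈ zetaSpan n :=
  ⟨Pi.single k 1, by
    rw [Finset.sum_eq_single_of_mem k (Finset.mem_Icc.2 ⟨h2k, hkn⟩) fun j _ hj => by
      simp [hj]]
    simp [show (0 : ℕ) ≠ k by omega]⟩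

theorem sum_range_one_div_pow_mem_zetaSpan (n j k : ℕ) :
    ∑ i ∈ Finset.range j, 1 / ((i : ℝ) + 1) ^ k ∈ zetaSpan n := by
  simpa using ratCast_mem_zetaSpan n (∑ i ∈ Finset.range j, 1 / ((i : ℚ) + 1) ^ k)

theorem hasSum_one_div_add_pow {k : ℕ} (hk : 2 ≤ k) (j : ℕ) :
    HasSum (fun m : ℕ => 1 / ((m : ℝ) + j + 1) ^ k)
      (zetaVal k - ∑ i ∈ Finset.range j, 1 / ((i : ℝ) + 1) ^ k) := by
  have hζ : Summable fun m : ℕ => 1 / ((m : ℝ) + 1) ^ k := by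
    simpa using (summable_nat_add_iff 1).2 (Real.summable_one_div_nat_pow.2 (by omega))
  simpa [zetaVal] using (hasSum_nat_add_iff' j).2 hζ.hasSum

theorem hasSum_one_div_sub_one_div_add (j : ℕ) :
    HasSum (fun m : ℕ => 1 / ((m : ℝ) + 1) - 1 / ((m : ℝ) + j + 1))
      (∑ i ∈ Finset.range j, 1 / ((i : ℝ) + 1)) := by
  set a : ℕ → ℝ := fun m => 1 / ((m : ℝ) + 1)
  have hpartial (M : ℕ) : ∑ m ∈ Finset.range M, (a m - a (m + j)) =
      ∑ i ∈ Finset.range j, a i - ∑ i ∈ Finset.range j, a (M + i) := by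
    have h := Finset.sum_range_add a M j
    rw [add_comm M j, Finset.sum_range_add a j M] at h
    simp only [Finset.sum_sub_distrib, add_comm _ j] at h ⊢
    linarith
  have ha : Tendsto a atTop (𝓝 0) := tendsto_one_div_add_atTop_nhds_zero_nat
  have key : HasSum (fun m => a m - a (m + j)) (∑ i ∈ Finset.range j, a i) := by
    rw [hasSum_iff_tendsto_nat_of_nonneg fun m => sub_nonneg.2 ?_]
    · simp_rw [hpartial]
      simpa using tendsto_const_nhds.sub (tendsto_finsetSum _ fun i _ =>
        ha.comp (tendsto_add_atTop_nat i) |>.congr fun M => by simp [add_comm])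
    · exact one_div_le_one_div_of_le (by positivity) (by simp)
  convert key using 2 with m
  simp only [a]
  push_cast
  ring

theorem tsum_mem_zetaSpan_of_eq_sum_one_div_pow {n : ℕ} (hn : 1 ≤ n) {f : ℕ → ℝ}
    (hf : Summable f) (s : Finset ℕ) (c : ℕ → ℕ → ℚ)
    (hfc : ∀ m, f m = ∑ j ∈ s, ∑ k ∈ Finset.range n, (c j k : ℝ) / ((m : ℝ) + j + 1) ^ (k + 1)) :
    ∑' m, f m ∈ zetaSpan n := by
  obtain ⟨n, rfl⟩ := Nat.exists_eq_add_of_le' hn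
  set x : ℕ → ℕ → ℝ := fun j m => 1 / ((m : ℝ) + j + 1)
  set b : ℝ := ∑ j ∈ s, (c j 0 : ℝ)
  set Sζ : ℝ := ∑ j ∈ s, ∑ k ∈ Finset.range n, (c j (k + 1) : ℝ) *
    (zetaVal (k + 2) - ∑ i ∈ Finset.range j, 1 / ((i : ℝ) + 1) ^ (k + 2))
  set Sh : ℝ := ∑ j ∈ s, (c j 0 : ℝ) * ∑ i ∈ Finset.range j, 1 / ((i : ℝ) + 1)
  have hζ : HasSum (fun m => ∑ j ∈ s, ∑ k ∈ Finset.range n, (c j (k + 1) : ℝ) * x j m ^ (k + 2))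
      Sζ :=
    hasSum_sum fun j _ => hasSum_sum fun k _ => by
      simpa [x, one_div_pow] using (hasSum_one_div_add_pow (by omega : 2 ≤ k + 2) j).mul_left
        (c j (k + 1) : ℝ)
  have hh : HasSum (fun m : ℕ => ∑ j ∈ s, (c j 0 : ℝ) * (1 / ((m : ℝ) + 1) - x j m)) Sh :=
    hasSum_sum fun j _ => (hasSum_one_div_sub_one_div_add j).mul_left _
  have hsplit (m : ℕ) : f m = ∑ j ∈ s, (c j 0 : ℝ) * x j m +
      ∑ j ∈ s, ∑ k ∈ Finset.range n, (c j (k + 1) : ℝ) * x j m ^ (k + 2) := by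
    rw [hfc, ← Finset.sum_add_distrib]
    refine Finset.sum_congr rfl fun j _ => ?_
    simp only [Finset.sum_range_succ', x, div_eq_mul_one_div (c _ _ : ℝ), one_div_pow]
    ring
  have hsimple (m : ℕ) : ∑ j ∈ s, (c j 0 : ℝ) * x j m =
      b * (1 / ((m : ℝ) + 1)) - ∑ j ∈ s, (c j 0 : ℝ) * (1 / ((m : ℝ) + 1) - x j m) := by
    simp only [b, Finset.sum_mul, mul_sub, Finset.sum_sub_distrib]
    ring
  -- The simple poles would otherwise leave a nonzero multiple of the harmonic series.
  have hb : b = 0 := by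
    by_contra hb
    have hbsum : Summable fun m : ℕ => b * (1 / ((m : ℝ) + 1)) :=
      ((hf.sub hζ.summable).add hh.summable).congr fun m => by rw [hsplit, hsimple]; ring
    have hharm : Summable fun m : ℕ => 1 / ((m : ℝ) + 1) :=
      (hbsum.mul_left b⁻¹).congr fun m => inv_mul_cancel_left₀ hb _
    exact Real.not_summable_one_div_natCast ((summable_nat_add_iff 1).1 (by simpa using hharm))
  have hfsum : HasSum f (-Sh + Sζ) :=
    (hh.neg.add hζ).congr_fun fun m => by rw [hsplit, hsimple, hb]; ring
  rw [hfsum.tsum_eq]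
  refine add_mem (neg_mem (Submodule.sum_mem _ fun j _ => ?_)) (Submodule.sum_mem _ fun j _ =>
    Submodule.sum_mem _ fun k hk => ?_)
  · simpa [Rat.smul_def] using
      Submodule.smul_mem _ (c j 0) (sum_range_one_div_pow_mem_zetaSpan _ j 1)
  · have hk : k < n := Finset.mem_range.1 hk
    simpa [Rat.smul_def] using Submodule.smul_mem _ (c j (k + 1)) (sub_mem
      (zetaVal_mem_zetaSpan (by omega : 2 ≤ k + 2) (by omega : k + 2 ≤ n + 1))
      (sum_range_one_div_pow_mem_zetaSpan _ j (k + 2)))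

noncomputable def prodXAddSucc (D : Multiset ℕ) : ℚ[X] := (D.map fun j => X + C ((j : ℚ) + 1)).prod

theorem aeval_prodXAddSucc (D : Multiset ℕ) (x : ℝ) :
    aeval x (prodXAddSucc D) = (D.map fun j : ℕ => x + j + 1).prod := by
  simp [prodXAddSucc, map_multiset_prod, Multiset.map_map, add_assoc]

theorem natDegree_prodXAddSucc (D : Multiset ℕ) :
    (prodXAddSucc D).natDegree = Multiset.card D := by
  rw [prodXAddSucc, natDegree_multiset_prod_of_monic _ fun p hp => by
    obtain ⟨j, -, rfl⟩ := Multiset.mem_map.1 hp; exact monic_X_add_C _]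
  simp only [Multiset.map_map, Function.comp_def, natDegree_X_add_C]
  simp

theorem summable_aeval_div_aeval {f g : ℚ[X]} (h : f.natDegree + 2 ≤ g.natDegree) :
    Summable fun m : ℕ => aeval (m : ℝ) f / aeval (m : ℝ) g := by
  set F := f.map (algebraMap ℚ ℝ)
  set G := g.map (algebraMap ℚ ℝ)
  have hz : (F.natDegree - G.natDegree : ℤ) ≤ -2 := by
    simp only [F, G, natDegree_map]; omega
  have hO : (fun x : ℝ => F.eval x / G.eval x) =O[atTop] fun x => x ^ (-2 : ℤ) := by
    refine (isEquivalent_atTop_div F G).isBigO.trans ((isBigO_const_mul_self _ _ _).trans ?_)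
    refine IsBigO.of_bound 1 ((eventually_ge_atTop 1).mono fun x hx => ?_)
    rw [one_mul, Real.norm_of_nonneg (by positivity), Real.norm_of_nonneg (by positivity)]
    exact zpow_le_zpow_right₀ hx hz
  have hO' := hO.comp_tendsto tendsto_natCast_atTop_atTop
  simp only [Function.comp_def, F, G, eval_map_algebraMap] at hO'
  refine summable_of_isBigO_nat ?_ hO'
  simp [Real.summable_nat_pow_inv]

theorem eq_zero_of_tendsto_aeval_natCast {q : ℚ[X]}
    (h : Tendsto (fun m : ℕ => aeval (m : ℝ) q) atTop (𝓝 0)) : q = 0 := by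
  set Q := q.map (algebraMap ℚ ℝ)
  have hQ : Tendsto (fun m : ℕ => Q.eval (m : ℝ)) atTop (𝓝 0) := by
    simpa [Q, eval_map_algebraMap] using h
  suffices Q = 0 from (Polynomial.map_eq_zero_iff (algebraMap ℚ ℝ).injective).1 this
  by_cases hdeg : 0 < Q.degree
  · have h1 := (Q.abs_tendsto_atTop hdeg).comp tendsto_natCast_atTop_atTop
    exact (not_tendsto_nhds_of_tendsto_atTop h1 0 (by simpa [Function.comp_def] using hQ.abs)).elim
  · have hC := eq_C_of_degree_le_zero (not_lt.1 hdeg)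
    rw [hC] at hQ ⊢
    simp only [eval_C, tendsto_const_nhds_iff] at hQ
    rw [hQ, C_0]

theorem exists_partialFractions {n : ℕ} (f : ℚ[X]) (D : Multiset ℕ) (hD : ∀ j, D.count j ≤ n) :
    ∃ (q : ℚ[X]) (c : ℕ → ℕ → ℚ), ∀ m : ℕ,
      aeval (m : ℝ) f / aeval (m : ℝ) (prodXAddSucc D) = aeval (m : ℝ) q +
        ∑ j ∈ D.toFinset, ∑ k ∈ Finset.range n, (c j k : ℝ) / ((m : ℝ) + j + 1) ^ (k + 1) := by
  classical
  -- In the ring of real sequences, evaluation at `m` inverts every `X + j + 1`, so the partial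
  -- fraction decomposition can be taken there, uniformly in `m`.
  let _ : Algebra ℚ[X] (ℕ → ℝ) :=
    (RingHom.pi fun m : ℕ => (aeval (m : ℝ)).toRingHom).toAlgebra
  have halg (p : ℚ[X]) (m : ℕ) : algebraMap ℚ[X] (ℕ → ℝ) p m = aeval (m : ℝ) p := rfl
  obtain ⟨q, r, hr, h⟩ := mul_prod_pow_inverse_eq_quo_add_sum_rem_mul_pow_inverse
    (K := ℕ → ℝ) (s := D.toFinset) f (g := fun j => X + C ((j : ℚ) + 1))
    (fun j _ => monic_X_add_C _)
    (fun i _ j _ hij => by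
      convert isCoprime_X_sub_C_of_isUnit_sub (R := ℚ) (a := -((i : ℚ) + 1)) (b := -((j : ℚ) + 1))
        (sub_ne_zero.2 (by simpa using hij)).isUnit using 1 <;> rw [map_neg, sub_neg_eq_add])
    (fun j => D.count j) (gi := fun j m => 1 / ((m : ℝ) + j + 1))
    (fun j _ => funext fun m => by
      rw [Pi.mul_apply, Pi.one_apply, halg, one_div_mul_eq_div, div_eq_one_iff_eq (by positivity)]
      simp [add_assoc])
  refine ⟨q, fun j k => if hk : k < D.count j then (r j ⟨k, hk⟩).coeff 0 else 0, fun m => ?_⟩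
  have hm := congrFun h m
  simp only [Pi.mul_apply, Finset.prod_apply, Pi.pow_apply, Pi.add_apply, Finset.sum_apply,
    halg] at hm
  rw [aeval_prodXAddSucc, Finset.prod_multiset_map_count D fun j : ℕ => (m : ℝ) + j + 1,
    div_eq_mul_inv, ← Finset.prod_inv_distrib]
  simp only [one_div, inv_pow] at hm ⊢
  rw [hm]
  congr 1
  refine Finset.sum_congr rfl fun j hj => ?_
  have hrC (l : Fin (D.count j)) : r j l = C ((r j l).coeff 0) :=
    eq_C_of_degree_le_zero (Order.le_of_lt_succ ((hr j hj l).trans_eq (degree_X_add_C _)))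
  rw [← Finset.sum_subset (Finset.range_subset_range.2 (hD j)) fun k _ hk => by
      simp [show ¬ k < D.count j by simpa using hk], ← Fin.sum_univ_eq_sum_range]
  refine Finset.sum_congr rfl fun l _ => ?_
  rw [hrC l, aeval_C, dif_pos l.isLt]
  simp [div_eq_mul_inv]

theorem tsum_aeval_div_prodXAddSucc_mem_zetaSpan {n : ℕ} (hn : 1 ≤ n) (f : ℚ[X])
    (D : Multiset ℕ) (hD : ∀ j, D.count j ≤ n) (hdeg : f.natDegree + 2 ≤ Multiset.card D) :
    ∑' m : ℕ, aeval (m : ℝ) f / aeval (m : ℝ) (prodXAddSucc D) ∈ zetaSpan n := by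
  obtain ⟨q, c, hqc⟩ := exists_partialFractions f D hD
  have hsum := summable_aeval_div_aeval (f := f) (g := prodXAddSucc D)
    (by rwa [natDegree_prodXAddSucc])
  have hfrac : Tendsto (fun m : ℕ => ∑ j ∈ D.toFinset, ∑ k ∈ Finset.range n,
      (c j k : ℝ) / ((m : ℝ) + j + 1) ^ (k + 1)) atTop
      (𝓝 (∑ j ∈ D.toFinset, ∑ k ∈ Finset.range n, 0)) :=
    tendsto_finsetSum _ fun j _ => tendsto_finsetSum _ fun k _ =>
      tendsto_const_nhds.div_atTop <| (tendsto_pow_atTop k.succ_ne_zero).comp <|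
        tendsto_atTop_add_const_right _ 1 <| tendsto_atTop_add_const_right _ (j : ℝ) <|
          tendsto_natCast_atTop_atTop
  have hq : q = 0 := eq_zero_of_tendsto_aeval_natCast <| by
    simpa [hqc] using hsum.tendsto_atTop_zero.sub hfrac
  exact tsum_mem_zetaSpan_of_eq_sum_one_div_pow hn hsum D.toFinset c fun m => by simp [hqc, hq]

def poleMultiset {ι : Type*} [Fintype ι] (U V : ι → ℕ) : Multiset ℕ :=
  ∑ i, (Multiset.range (V i + 1)).map (U i + ·)

theorem count_poleMultiset_le {ι : Type*} [Fintype ι] (U V : ι → ℕ) (j : ℕ) :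
    (poleMultiset U V).count j ≤ Fintype.card ι := by
  rw [poleMultiset, Multiset.count_sum']
  calc ∑ i, ((Multiset.range (V i + 1)).map (U i + ·)).count j ≤ ∑ _i : ι, 1 :=
        Finset.sum_le_sum fun i _ => Multiset.nodup_iff_count_le_one.1
          ((Multiset.nodup_range _).map (add_right_injective (U i))) j
    _ = Fintype.card ι := by simp

theorem card_poleMultiset {ι : Type*} [Fintype ι] (U V : ι → ℕ) :
    Multiset.card (poleMultiset U V) = ∑ i, (V i + 1) := by
  simp [poleMultiset, Multiset.card_sum]

theorem cast_choose_eq_prod_div (m M : ℕ) :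
    ((m + M).choose M : ℝ) = (∏ t ∈ Finset.range M, ((m : ℝ) + t + 1)) / M ! := by
  have h := Nat.ascFactorial_eq_factorial_mul_choose m M
  rw [Nat.ascFactorial_eq_prod_range] at h
  rw [eq_div_iff (by positivity), mul_comm]
  exact_mod_cast h.symm.trans (Finset.prod_congr rfl fun t _ => by ring)

theorem factorial_mul_factorial_div_eq_div_prod (a b : ℕ) :
    (a ! * b ! : ℝ) / (a + b + 1)! = b ! / ∏ t ∈ Finset.range (b + 1), ((a : ℝ) + t + 1) := by
  have h := Nat.factorial_mul_ascFactorial a (b + 1)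
  rw [Nat.ascFactorial_eq_prod_range, ← add_assoc] at h
  rw [← h]
  push_cast
  rw [mul_div_mul_left _ _ (by positivity)]
  simp only [add_right_comm _ (1 : ℝ)]

theorem choose_mul_prod_beta_eq {ι : Type*} [Fintype ι] (U V : ι → ℕ) (M m : ℕ) :
    ((m + M).choose M : ℝ) * ∏ i, ((U i + m)! * (V i)! : ℝ) / (U i + m + V i + 1)! =
      aeval (m : ℝ) (C ((∏ i, ((V i)! : ℚ)) / M !) * prodXAddSucc (Multiset.range M)) /
        aeval (m : ℝ) (prodXAddSucc (poleMultiset U V)) := by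
  simp only [factorial_mul_factorial_div_eq_div_prod, cast_choose_eq_prod_div, map_mul, aeval_C,
    aeval_prodXAddSucc, poleMultiset, ← Multiset.coe_mapAddMonoidHom, map_sum, Multiset.prod_sum]
  simp only [Multiset.coe_mapAddMonoidHom, Multiset.map_map, Function.comp_def,
    Finset.prod_div_distrib]
  have hrange (k : ℕ) (g : ℕ → ℝ) :
      ((Multiset.range k).map g).prod = ∏ t ∈ Finset.range k, g t := rfl
  simp only [hrange, eq_ratCast, Rat.cast_div, Rat.cast_prod, Rat.cast_natCast]
  rw [Finset.prod_congr rfl fun i _ => Finset.prod_congr rfl fun t _ =>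
    show ((U i + m : ℕ) : ℝ) + t + 1 = m + ((U i + t : ℕ) : ℝ) + 1 by push_cast; ring]
  ring

theorem integral_pow_mul_one_sub_pow (a b : ℕ) :
    ∫ x in (0 : ℝ)..1, x ^ a * (1 - x) ^ b = (a ! * b ! : ℝ) / (a + b + 1)! := by
  have h := Complex.betaIntegral_eq_Gamma_mul_div (a + 1) (b + 1)
    (by simp; positivity) (by simp; positivity)
  simp only [Complex.betaIntegral, add_sub_cancel_right, Complex.cpow_natCast] at h
  rw [show (a + 1 : ℂ) + (b + 1) = ((a + b + 1 : ℕ) : ℂ) + 1 by push_cast; ring] at h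
  simp only [Complex.Gamma_nat_eq_factorial] at h
  rw [← Complex.ofReal_inj]
  push_cast [← intervalIntegral.integral_ofReal]
  exact h

theorem restrict_unitCube (n : ℕ) :
    volume.restrict (unitCube n) = Measure.pi fun _ => volume.restrict (Set.Ioo (0 : ℝ) 1) := by
  rw [unitCube, volume_pi, Measure.restrict_pi_pi]

theorem integrableOn_unitCube_prod {n : ℕ} (p q : Fin n → ℕ) :
    IntegrableOn (fun x : Fin n → ℝ => ∏ i, x i ^ p i * (1 - x i) ^ q i) (unitCube n) := by
  rw [IntegrableOn, restrict_unitCube]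
  refine Integrable.fintype_prod (f := fun i (t : ℝ) => t ^ p i * (1 - t) ^ q i) fun i => ?_
  exact (Continuous.integrableOn_Icc (by fun_prop)).mono_set Set.Ioo_subset_Icc_self

theorem integral_unitCube_prod {n : ℕ} (p q : Fin n → ℕ) :
    ∫ x in unitCube n, ∏ i, x i ^ p i * (1 - x i) ^ q i =
      ∏ i, ((p i)! * (q i)! : ℝ) / (p i + q i + 1)! := by
  rw [restrict_unitCube,
    integral_fintype_prod_eq_prod (f := fun i (t : ℝ) => t ^ p i * (1 - t) ^ q i)]
  refine Finset.prod_congr rfl fun i _ => ?_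
  rw [← integral_pow_mul_one_sub_pow, intervalIntegral.integral_of_le zero_le_one,
    integral_Ioc_eq_integral_Ioo]

theorem integrable_and_hasSum_integral_of_summable_integral_norm {α E : Type*} [MeasurableSpace α]
    {μ : Measure α} [NormedAddCommGroup E] [NormedSpace ℝ E]
    {f : ℕ → α → E} {F : α → E}
    (hf : ∀ i, Integrable (f i) μ) (hsum : Summable fun i => ∫ a, ‖f i a‖ ∂μ)
    (hF : ∀ᵐ a ∂μ, HasSum (fun i => f i a) (F a)) :
    Integrable F μ ∧ HasSum (fun i => ∫ a, f i a ∂μ) (∫ a, F a ∂μ) := by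
  have hFeq : F =ᵐ[μ] fun a => ∑' i, f i a := hF.mono fun a h => h.tsum_eq.symm
  refine ⟨⟨aestronglyMeasurable_of_tendsto_ae atTop
    (fun N => Finset.aestronglyMeasurable_fun_sum _ fun i _ => (hf i).1)
    (hF.mono fun a h => h.tendsto_sum_nat), ?_⟩, ?_⟩
  · calc ∫⁻ a, ‖F a‖ₑ ∂μ ≤ ∫⁻ a, ∑' i, ‖f i a‖ₑ ∂μ :=
          lintegral_mono_ae (hFeq.mono fun a h => h ▸ enorm_tsum_le_tsum_enorm)
      _ = ∑' i, ENNReal.ofReal (∫ a, ‖f i a‖ ∂μ) := by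
          rw [lintegral_tsum fun i => (hf i).1.enorm]
          simp_rw [ofReal_integral_norm_eq_lintegral_enorm (hf _)]
      _ < ⊤ := by
          rw [← ENNReal.ofReal_tsum_of_nonneg
            (fun i => integral_nonneg fun _ => norm_nonneg _) hsum]
          exact ENNReal.ofReal_lt_top
  · rw [integral_congr_ae hFeq]
    exact hasSum_integral_of_summable_integral_norm hf hsum

theorem hasSum_choose_mul_prod_pow {n : ℕ} (hn : 1 ≤ n) (U V : Fin n → ℕ) (M : ℕ)
    {x : Fin n → ℝ} (hx : x ∈ unitCube n) :
    HasSum (fun m => ((m + M).choose M : ℝ) * ∏ i, x i ^ (U i + m) * (1 - x i) ^ V i)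
      ((∏ i, x i ^ U i * (1 - x i) ^ V i) / (1 - ∏ i, x i) ^ (M + 1)) := by
  have hxi : ∀ i, x i ∈ Set.Ioo (0 : ℝ) 1 := fun i => hx i (Set.mem_univ i)
  have : Nonempty (Fin n) := ⟨⟨0, hn⟩⟩
  have hprod_lt : ∏ i, x i < 1 := by
    simpa using Finset.prod_lt_prod_of_nonempty (fun i _ => (hxi i).1) (fun i _ => (hxi i).2)
      Finset.univ_nonempty
  have hnorm : ‖∏ i, x i‖ < 1 := by
    rwa [Real.norm_of_nonneg (Finset.prod_nonneg fun i _ => (hxi i).1.le)]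
  rw [div_eq_mul_one_div]
  refine ((hasSum_choose_mul_geometric_of_norm_lt_one M hnorm).mul_left
    (∏ i, x i ^ U i * (1 - x i) ^ V i)).congr_fun fun m => ?_
  simp only [pow_add, Finset.prod_mul_distrib, Finset.prod_pow]
  ring

theorem integrableOn_unitCube_and_hasSum_integral {n : ℕ} (hn : 1 ≤ n) (U V : Fin n → ℕ)
    (M : ℕ) (hr : Summable fun m =>
      ((m + M).choose M : ℝ) * ∏ i, ((U i + m)! * (V i)! : ℝ) / (U i + m + V i + 1)!) :
    IntegrableOn (fun x : Fin n → ℝ =>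
        (∏ i, x i ^ U i * (1 - x i) ^ V i) / (1 - ∏ i, x i) ^ (M + 1)) (unitCube n) ∧
      HasSum (fun m => ((m + M).choose M : ℝ) * ∏ i, ((U i + m)! * (V i)! : ℝ) /
        (U i + m + V i + 1)!)
        (∫ x in unitCube n, (∏ i, x i ^ U i * (1 - x i) ^ V i) / (1 - ∏ i, x i) ^ (M + 1)) := by
  have hcube : MeasurableSet (unitCube n) := MeasurableSet.univ_pi fun _ => measurableSet_Ioo
  set f : ℕ → (Fin n → ℝ) → ℝ :=
    fun m x => ((m + M).choose M : ℝ) * ∏ i, x i ^ (U i + m) * (1 - x i) ^ V i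
  have hf_int (m : ℕ) : IntegrableOn (f m) (unitCube n) :=
    (integrableOn_unitCube_prod _ _).const_mul _
  have hf_integral (m : ℕ) : ∫ x in unitCube n, f m x =
      ((m + M).choose M : ℝ) * ∏ i, ((U i + m)! * (V i)! : ℝ) / (U i + m + V i + 1)! := by
    rw [integral_const_mul, integral_unitCube_prod (fun i => U i + m)]
  have hf_norm (m : ℕ) : ∫ x in unitCube n, ‖f m x‖ = ∫ x in unitCube n, f m x := by
    refine setIntegral_congr_fun hcube fun x hx => Real.norm_of_nonneg ?_
    have hxi : ∀ i, x i ∈ Set.Ioo (0 : ℝ) 1 := fun i => hx i (Set.mem_univ i)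
    exact mul_nonneg (Nat.cast_nonneg _) (Finset.prod_nonneg fun i _ =>
      mul_nonneg (pow_nonneg (hxi i).1.le _) (pow_nonneg (sub_nonneg.2 (hxi i).2.le) _))
  obtain ⟨hint, hsum⟩ := integrable_and_hasSum_integral_of_summable_integral_norm hf_int
    (hr.congr fun m => by rw [hf_norm, hf_integral])
    ((ae_restrict_iff' hcube).2 (Eventually.of_forall fun x hx =>
      hasSum_choose_mul_prod_pow hn U V M hx))
  exact ⟨hint, by simpa only [hf_integral] using hsum⟩

theorem stmt9_general (n : ℕ) (hn : 1 ≤ n) (u v : Fin n → ℕ)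
    (N : ℕ) (hsum : N + 1 ≤ ∑ i, v i) :
    IntegrableOn (fun x : Fin n → ℝ =>
        (∏ i, x i ^ (u i - 1) * (1 - x i) ^ (v i - 1)) / (1 - ∏ i, x i) ^ N)
      (unitCube n) ∧
    ∃ a : ℕ → ℚ,
      (∫ x in unitCube n,
          (∏ i, x i ^ (u i - 1) * (1 - x i) ^ (v i - 1)) / (1 - ∏ i, x i) ^ N)
        = (a 0 : ℝ) + ∑ k ∈ Finset.Icc 2 n, (a k : ℝ) * zetaVal k := by
  rcases N with _ | M
  · simp only [pow_zero, div_one]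
    refine ⟨integrableOn_unitCube_prod _ _, ?_⟩
    rw [integral_unitCube_prod]
    refine mem_zetaSpan.1 ?_
    simpa using ratCast_mem_zetaSpan n
      (∏ i, ((u i - 1)! * (v i - 1)! : ℚ) / (u i - 1 + (v i - 1) + 1)!)
  · set U : Fin n → ℕ := fun i => u i - 1
    set V : Fin n → ℕ := fun i => v i - 1
    set P : ℚ[X] := C ((∏ i, ((V i)! : ℚ)) / M !) * prodXAddSucc (Multiset.range M)
    have hdeg : P.natDegree + 2 ≤ Multiset.card (poleMultiset U V) := by
      have hP : P.natDegree ≤ M :=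
        (natDegree_C_mul_le _ _).trans (by simp [natDegree_prodXAddSucc])
      have hV : ∑ i, v i ≤ ∑ i, (V i + 1) := Finset.sum_le_sum fun i _ => by simp only [V]; omega
      rw [card_poleMultiset]
      omega
    obtain ⟨hint, hI⟩ := integrableOn_unitCube_and_hasSum_integral hn U V M
      ((summable_aeval_div_aeval (by rwa [natDegree_prodXAddSucc])).congr fun m =>
        (choose_mul_prod_beta_eq U V M m).symm)
    refine ⟨hint, mem_zetaSpan.1 ?_⟩
    rw [← hI.tsum_eq]
    simp_rw [choose_mul_prod_beta_eq]
    exact tsum_aeval_div_prodXAddSucc_mem_zetaSpan hn P _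
      (fun j => by simpa using count_poleMultiset_le U V j) hdeg

theorem stmt9 (n : ℕ) (hn : 1 ≤ n) (u v : Fin n → ℕ)
    (hu : ∀ i, 1 ≤ u i) (hv : ∀ i, 1 ≤ v i)
    (N : ℕ) (hsum : N + 1 ≤ ∑ i, v i) :
    IntegrableOn (fun x : Fin n → ℝ =>
        (∏ i, x i ^ (u i - 1) * (1 - x i) ^ (v i - 1)) / (1 - ∏ i, x i) ^ N)
      (unitCube n) ∧
    ∃ a : ℕ → ℚ,
      (∫ x in unitCube n,
          (∏ i, x i ^ (u i - 1) * (1 - x i) ^ (v i - 1)) / (1 - ∏ i, x i) ^ N)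
        = (a 0 : ℝ) + ∑ k ∈ Finset.Icc 2 n, (a k : ℝ) * zetaVal k :=
  stmt9_general n hn u v N hsum
end

section
/- Let u, v ≥ 1 and N ≥ 0 be integers with u + v ≤ N. Then there exists a polynomial P ∈ ℚ[T] such that for every real number t with 0 ≤ t < 1 one has ∫₀¹ x^{u−1}(1−x)^{v−1}/(1−tx)^N dx = P(t)/(1−t)^{N−v}. -/
/-!
The substitution `x = (1 - y) / (1 - t y)`, an involution of `[0, 1]` for `t < 1`, turns the
integral into `(1 - t)^{-(N - v)} ∫₀¹ y^{v-1} (1 - y)^{u-1} (1 - t y)^{N-u-v} dy`. Expanding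
`(1 - t y)^{N-u-v}` binomially leaves a polynomial in `t` whose coefficients are Beta integrals
`∫₀¹ y^m (1 - y)^n dy`, and these are rational.
-/

open MeasureTheory Polynomial

lemma exists_rat_integral_pow_mul_one_sub_pow (m n : ℕ) :
    ∃ q : ℚ, ∫ x in (0 : ℝ)..1, x ^ m * (1 - x) ^ n = q := by
  refine ⟨∑ j ∈ Finset.range (n + 1), (-1) ^ j * n.choose j / (m + j + 1), ?_⟩
  have hexpand : ∀ x : ℝ, x ^ m * (1 - x) ^ n
      = ∑ j ∈ Finset.range (n + 1), ((-1) ^ j * n.choose j) * x ^ (m + j) := by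
    intro x
    rw [sub_eq_add_neg, add_comm, add_pow, Finset.mul_sum]
    refine Finset.sum_congr rfl fun j _ => ?_
    rw [neg_pow, pow_add]
    ring
  simp_rw [hexpand]
  rw [intervalIntegral.integral_finsetSum fun j _ =>
    ((continuous_pow _).intervalIntegrable _ _).const_mul _]
  push_cast
  refine Finset.sum_congr rfl fun j _ => ?_
  rw [intervalIntegral.integral_const_mul, integral_pow]
  push_cast
  ring

lemma exists_polynomial_integral_pow_mul_one_sub_pow_mul_one_sub_mul_pow (m n M : ℕ) :
    ∃ P : ℚ[X], ∀ t : ℝ,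
      ∫ y in (0 : ℝ)..1, y ^ m * (1 - y) ^ n * (1 - t * y) ^ M = aeval t P := by
  choose q hq using fun k => exists_rat_integral_pow_mul_one_sub_pow (m + k) n
  refine ⟨∑ k ∈ Finset.range (M + 1), C ((-1) ^ k * M.choose k * q k) * X ^ k, fun t => ?_⟩
  have hexpand : ∀ y : ℝ, y ^ m * (1 - y) ^ n * (1 - t * y) ^ M
      = ∑ k ∈ Finset.range (M + 1),
          ((-1) ^ k * M.choose k * t ^ k) * (y ^ (m + k) * (1 - y) ^ n) := by
    intro y
    rw [show 1 - t * y = -(t * y) + 1 by ring, add_pow, Finset.mul_sum]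
    refine Finset.sum_congr rfl fun k _ => ?_
    rw [neg_pow, mul_pow, pow_add]
    ring
  simp_rw [hexpand]
  rw [intervalIntegral.integral_finsetSum fun k _ =>
      ((by fun_prop : Continuous fun y : ℝ => y ^ (m + k) * (1 - y) ^ n).intervalIntegrable
        _ _).const_mul _,
    map_sum]
  refine Finset.sum_congr rfl fun k _ => ?_
  rw [intervalIntegral.integral_const_mul, hq, map_mul, aeval_C, map_pow, aeval_X, eq_ratCast]
  push_cast
  ring

lemma one_sub_mul_pos_of_mem_Icc {t y : ℝ} (ht : t < 1) (hy : y ∈ Set.Icc (0 : ℝ) 1) :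
    0 < 1 - t * y := by
  obtain ⟨hy0, hy1⟩ := hy
  rcases le_total t 0 with h | h <;> nlinarith

lemma integral_zero_one_eq_integral_comp_moebius {t : ℝ} (ht : t < 1) (g : ℝ → ℝ) :
    ∫ x in (0 : ℝ)..1, g x
      = ∫ y in (0 : ℝ)..1, g ((1 - y) / (1 - t * y)) * ((1 - t) / (1 - t * y) ^ 2) := by
  have hpos : ∀ y ∈ Set.Icc (0 : ℝ) 1, 0 < 1 - t * y := fun _ => one_sub_mul_pos_of_mem_Icc ht
  have hderiv : ∀ y ∈ Set.Icc (0 : ℝ) 1,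
      HasDerivAt (fun y => (1 - y) / (1 - t * y)) ((t - 1) / (1 - t * y) ^ 2) y := by
    intro y hy
    have hnum : HasDerivAt (fun y : ℝ => 1 - y) (-1) y := by
      simpa using (hasDerivAt_id y).const_sub 1
    have hden : HasDerivAt (fun y : ℝ => 1 - t * y) (-t) y := by
      simpa using ((hasDerivAt_id y).const_mul t).const_sub 1
    exact (hnum.div hden (hpos y hy).ne').congr_deriv (by ring)
  have hsubst := intervalIntegral.integral_comp_mul_deriv_of_deriv_nonpos (g := g)
    (fun y hy =>
      (hderiv y (by rwa [Set.uIcc_of_le zero_le_one] at hy)).continuousAt.continuousWithinAt)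
    (fun y hy => hderiv y (Set.Ioo_subset_Icc_self (by simpa only [zero_le_one, min_eq_left,
      max_eq_right] using hy)))
    (fun y _ => div_nonpos_of_nonpos_of_nonneg (by linarith) (sq_nonneg _))
  simp only [Function.comp_def, mul_zero, sub_zero, div_one, sub_self, zero_div] at hsubst
  rw [intervalIntegral.integral_symm, ← hsubst, ← intervalIntegral.integral_neg]
  congr 1 with y
  ring

lemma beta_integrand_comp_moebius_mul_deriv {t y : ℝ} (ht : t < 1)
    (hy : y ∈ Set.Icc (0 : ℝ) 1) (a b M : ℕ) :
    ((1 - y) / (1 - t * y)) ^ a * (1 - (1 - y) / (1 - t * y)) ^ b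
        / (1 - t * ((1 - y) / (1 - t * y))) ^ (M + a + b + 2) * ((1 - t) / (1 - t * y) ^ 2)
      = y ^ b * (1 - y) ^ a * (1 - t * y) ^ M / (1 - t) ^ (M + a + 1) := by
  have hs : 1 - t ≠ 0 := by linarith
  have hd : 1 - t * y ≠ 0 := (one_sub_mul_pos_of_mem_Icc ht hy).ne'
  have h1 : 1 - (1 - y) / (1 - t * y) = y * (1 - t) / (1 - t * y) := by
    rw [eq_div_iff hd, sub_mul, div_mul_cancel₀ _ hd]
    ring
  have h2 : 1 - t * ((1 - y) / (1 - t * y)) = (1 - t) / (1 - t * y) := by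
    rw [eq_div_iff hd, sub_mul, mul_assoc, div_mul_cancel₀ _ hd]
    ring
  rw [h1, h2]
  generalize 1 - t * y = d at hd ⊢
  simp only [div_pow, mul_pow, pow_add]
  field_simp

lemma integral_pow_mul_one_sub_pow_div_one_sub_mul_pow {t : ℝ} (ht : t < 1) (a b M : ℕ) :
    ∫ x in (0 : ℝ)..1, x ^ a * (1 - x) ^ b / (1 - t * x) ^ (M + a + b + 2)
      = (∫ y in (0 : ℝ)..1, y ^ b * (1 - y) ^ a * (1 - t * y) ^ M) / (1 - t) ^ (M + a + 1) := by
  rw [integral_zero_one_eq_integral_comp_moebius ht, ← intervalIntegral.integral_div]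
  refine intervalIntegral.integral_congr fun y hy => ?_
  rw [Set.uIcc_of_le zero_le_one] at hy
  exact beta_integrand_comp_moebius_mul_deriv ht hy a b M

theorem stmt12 (u v N : ℕ) (hu : 1 ≤ u) (hv : 1 ≤ v) (huv : u + v ≤ N) :
    ∃ P : Polynomial ℚ, ∀ t : ℝ, 0 ≤ t → t < 1 →
      (∫ x in Set.Ioo (0 : ℝ) 1, x ^ (u - 1) * (1 - x) ^ (v - 1) / (1 - t * x) ^ N)
        = Polynomial.aeval t P / (1 - t) ^ (N - v) := by
  obtain ⟨a, rfl⟩ : ∃ a, u = a + 1 := ⟨u - 1, by omega⟩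
  obtain ⟨b, rfl⟩ : ∃ b, v = b + 1 := ⟨v - 1, by omega⟩
  obtain ⟨M, rfl⟩ : ∃ M, N = M + a + b + 2 := ⟨N - a - b - 2, by omega⟩
  obtain ⟨P, hP⟩ := exists_polynomial_integral_pow_mul_one_sub_pow_mul_one_sub_mul_pow b a M
  refine ⟨P, fun t _ ht => ?_⟩
  rw [← integral_Ioc_eq_integral_Ioo, ← intervalIntegral.integral_of_le zero_le_one,
    Nat.add_sub_cancel, Nat.add_sub_cancel, integral_pow_mul_one_sub_pow_div_one_sub_mul_pow ht,
    hP, show M + a + b + 2 - (b + 1) = M + a + 1 by omega]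
end

section
/- Let m ≥ 1 and s ≥ 1 be integers and let c_{j,r} ∈ ℚ for 1 ≤ j ≤ m and 1 ≤ r ≤ s be rational numbers satisfying Σ_{j=1}^m c_{j,1} = 0. Define R : ℕ → ℚ by R(k) = Σ_{j=1}^m Σ_{r=1}^s c_{j,r}/(k+j)^r. Then the series Σ_{k=0}^∞ R(k) converges absolutely and there exists a rational number q such that Σ_{k=0}^∞ R(k) = q + Σ_{r=2}^s (Σ_{j=1}^m c_{j,r}) · ζ(r). -/
/-!
Write `1/(k+j)^r = 1/(k+1)^r - (1/(k+1)^r - 1/(k+j)^r)`. The bracket telescopes for every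
`r ≥ 1`, with the rational sum `∑_{i<j-1} 1/(i+1)^r`. What is left is
`∑_r (∑_j c_{j,r}) / (k+1)^r`, whose `r = 1` coefficient vanishes by hypothesis, and each
term with `r ≥ 2` sums to `(∑_j c_{j,r}) ζ(r)`.
-/

open Filter Finset Topology

theorem Antitone.hasSum_sub_add {f : ℕ → ℝ} (hf : Antitone f) (hlim : Tendsto f atTop (𝓝 0))
    (n : ℕ) : HasSum (fun k => f k - f (k + n)) (∑ i ∈ range n, f i) := by
  refine (hasSum_iff_tendsto_nat_of_nonneg (fun k => sub_nonneg.2 (hf (k.le_add_right n))) _).2 ?_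
  have hpartial : ∀ N, ∑ k ∈ range N, (f k - f (k + n))
      = ∑ i ∈ range n, f i - ∑ i ∈ range n, f (N + i) := by
    intro N
    have h₁ := sum_range_add f N n
    have h₂ := sum_range_add f n N
    rw [add_comm n N] at h₂
    simp only [sum_sub_distrib, add_comm _ n]
    linarith
  have htail : Tendsto (fun N => ∑ i ∈ range n, f (N + i)) atTop (𝓝 0) := by
    simpa using tendsto_finsetSum (range n) fun i _ => hlim.comp (tendsto_add_atTop_nat i)
  simpa [hpartial] using tendsto_const_nhds.sub htail

theorem hasSum_one_div_pow_sub_shift {r : ℕ} (hr : 1 ≤ r) {j : ℕ} (hj : 1 ≤ j) :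
    HasSum (fun k : ℕ => 1 / ((k : ℝ) + 1) ^ r - 1 / ((k : ℝ) + j) ^ r)
      (∑ i ∈ range (j - 1), 1 / ((i : ℝ) + 1) ^ r) := by
  obtain ⟨n, rfl⟩ : ∃ n, j = n + 1 := ⟨j - 1, by omega⟩
  have hanti : Antitone fun k : ℕ => 1 / ((k : ℝ) + 1) ^ r := fun a b hab => by
    dsimp only
    gcongr
  have hlim : Tendsto (fun k : ℕ => 1 / ((k : ℝ) + 1) ^ r) atTop (𝓝 0) := by
    simpa [one_div_pow, zero_pow (by omega : r ≠ 0)] using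
      (tendsto_one_div_add_atTop_nhds_zero_nat (𝕜 := ℝ)).pow r
  convert hanti.hasSum_sub_add hlim n using 2 with k
  · push_cast
    ring_nf
  · simp

theorem hasSum_zetaVal {r : ℕ} (hr : 2 ≤ r) :
    HasSum (fun k : ℕ => 1 / ((k : ℝ) + 1) ^ r) (zetaVal r) := by
  refine Summable.hasSum ?_
  exact_mod_cast (summable_nat_add_iff 1).2 (Real.summable_one_div_nat_pow.2 hr)

theorem hasSum_sum_div_add_one_pow {C : ℕ → ℝ} (hC : C 1 = 0) (s : ℕ) :
    HasSum (fun k : ℕ => ∑ r ∈ Icc 1 s, C r / ((k : ℝ) + 1) ^ r)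
      (∑ r ∈ Icc 2 s, C r * zetaVal r) := by
  have hdrop : ∀ k : ℕ, ∑ r ∈ Icc 1 s, C r / ((k : ℝ) + 1) ^ r
      = ∑ r ∈ Icc 2 s, C r * (1 / ((k : ℝ) + 1) ^ r) := fun k => by
    refine (sum_subset (Icc_subset_Icc_left one_le_two) fun r hr hr₂ => ?_).symm.trans
      (sum_congr rfl fun r _ => mul_one_div _ _).symm
    obtain rfl : r = 1 := by simp only [mem_Icc] at hr hr₂; omega
    simp [hC]
  simpa only [hdrop] using
    hasSum_sum fun r hr => (hasSum_zetaVal (mem_Icc.1 hr).1).mul_left (C r)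

theorem stmt15_general (m s : ℕ) (c : ℕ → ℕ → ℚ)
    (hc : ∑ j ∈ Finset.Icc 1 m, c j 1 = 0) :
    Summable (fun k : ℕ =>
      |∑ j ∈ Finset.Icc 1 m, ∑ r ∈ Finset.Icc 1 s,
        (c j r : ℝ) / ((k : ℝ) + (j : ℝ)) ^ r|) ∧
    ∃ q : ℚ,
      (∑' k : ℕ, ∑ j ∈ Finset.Icc 1 m, ∑ r ∈ Finset.Icc 1 s,
          (c j r : ℝ) / ((k : ℝ) + (j : ℝ)) ^ r)
        = (q : ℝ) + ∑ r ∈ Finset.Icc 2 s,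
            ((∑ j ∈ Finset.Icc 1 m, c j r : ℚ) : ℝ) * zetaVal r := by
  have hdecomp : ∀ k : ℕ, ∑ j ∈ Icc 1 m, ∑ r ∈ Icc 1 s, (c j r : ℝ) / ((k : ℝ) + j) ^ r
      = ∑ r ∈ Icc 1 s, ((∑ j ∈ Icc 1 m, c j r : ℚ) : ℝ) / ((k : ℝ) + 1) ^ r
        - ∑ j ∈ Icc 1 m, ∑ r ∈ Icc 1 s,
            (c j r : ℝ) * (1 / ((k : ℝ) + 1) ^ r - 1 / ((k : ℝ) + j) ^ r) := fun k => by
    push_cast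
    simp only [sum_div, mul_sub, sum_sub_distrib, mul_one_div]
    rw [sum_comm (s := Icc 1 s)]
    ring
  have hpoles : ∀ j ∈ Icc 1 m, HasSum
      (fun k : ℕ => ∑ r ∈ Icc 1 s, (c j r : ℝ) * (1 / ((k : ℝ) + 1) ^ r - 1 / ((k : ℝ) + j) ^ r))
      (∑ r ∈ Icc 1 s, (c j r : ℝ) * ∑ i ∈ range (j - 1), 1 / ((i : ℝ) + 1) ^ r) :=
    fun j hj => hasSum_sum fun r hr =>
      (hasSum_one_div_pow_sub_shift (mem_Icc.1 hr).1 (mem_Icc.1 hj).1).mul_left _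
  have hR := (hasSum_sum_div_add_one_pow
    (C := fun r => ((∑ j ∈ Icc 1 m, c j r : ℚ) : ℝ)) (by exact_mod_cast hc) s).sub
    (hasSum_sum hpoles)
  simp only [← hdecomp] at hR
  refine ⟨hR.summable.abs,
    -∑ j ∈ Icc 1 m, ∑ r ∈ Icc 1 s, c j r * ∑ i ∈ range (j - 1), 1 / ((i : ℚ) + 1) ^ r, ?_⟩
  rw [hR.tsum_eq]
  push_cast
  ring

theorem stmt15 (m s : ℕ) (hm : 1 ≤ m) (hs : 1 ≤ s) (c : ℕ → ℕ → ℚ)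
    (hc : ∑ j ∈ Finset.Icc 1 m, c j 1 = 0) :
    Summable (fun k : ℕ =>
      |∑ j ∈ Finset.Icc 1 m, ∑ r ∈ Finset.Icc 1 s,
        (c j r : ℝ) / ((k : ℝ) + (j : ℝ)) ^ r|) ∧
    ∃ q : ℚ,
      (∑' k : ℕ, ∑ j ∈ Finset.Icc 1 m, ∑ r ∈ Finset.Icc 1 s,
          (c j r : ℝ) / ((k : ℝ) + (j : ℝ)) ^ r)
        = (q : ℝ) + ∑ r ∈ Finset.Icc 2 s,
            ((∑ j ∈ Finset.Icc 1 m, c j r : ℚ) : ℝ) * zetaVal r :=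
  stmt15_general m s c hc
end
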